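/- arXiv:1101.0737 — 6 statements merged into one kernel-verified Lean document; each statement's English description precedes it below -/
import Mathlib

section
/- Let k be a field, K = k(u,v), and let ψ be the automorphism of K with ψ(u) = u⁻¹, ψ(v) = v⁻¹ (pullback by the coordinate-swap [x:y][z:w] ↦ [y:x][w:z]). Let σ be the automorphism with σ(u) = uv, σ(v) = v, and let τ be any automorphism of the form τ(u) = (γu+δ)/(δu+γ), τ(v) = (εv+ζ)/(ζv+ε) with γ²≠δ², ε²≠ζ². Then ψ commutes with the composite φ = σ ∘ τ: ψ ∘ φ = φ ∘ ψ as automorphisms of K. -/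
/- k is a field; K = k(u,v) is the rational function field; σ, τ, ψ are
k-algebra automorphisms of K with ψ(u) = u⁻¹, ψ(v) = v⁻¹ (pullback by the
coordinate swap), σ(u) = uv, σ(v) = v, and
τ(u) = (γu+δ)/(δu+γ), τ(v) = (εv+ζ)/(ζv+ε), where γ, δ, ε, ζ ∈ k satisfy
γ² ≠ δ² and ε² ≠ ζ².  Then ψ commutes with the composite φ = σ ∘ τ. -/

open MvPolynomial

noncomputable section

variable (k : Type*) [Field k]

abbrev RatFunc2 := FractionRing (MvPolynomial (Fin 2) k)

def uGen : RatFunc2 k := algebraMap (MvPolynomial (Fin 2) k) (RatFunc2 k) (X 0)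

def vGen : RatFunc2 k := algebraMap (MvPolynomial (Fin 2) k) (RatFunc2 k) (X 1)

def cst (a : k) : RatFunc2 k := algebraMap k (RatFunc2 k) a

set_option synthInstance.maxHeartbeats 1000000

lemma cst_eq (a : k) : cst k a = algebraMap (MvPolynomial (Fin 2) k) (RatFunc2 k) (C a) := by
  simp [cst, IsScalarTower.algebraMap_apply k (MvPolynomial (Fin 2) k) (RatFunc2 k)]

lemma nzUV (a b : k) (h : ¬ (a = 0 ∧ b = 0)) : cst k a * (uGen k * vGen k) + cst k b ≠ 0 := by
  have heq : cst k a * (uGen k * vGen k) + cst k b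
      = algebraMap (MvPolynomial (Fin 2) k) (RatFunc2 k) (C a * (X 0 * X 1) + C b) := by
    rw [map_add, map_mul, map_mul, cst_eq, cst_eq, uGen, vGen]
  rw [heq, Ne, IsFractionRing.to_map_eq_zero_iff]
  intro hz
  rcases not_and_or.mp h with ha | hb
  · apply ha
    have := congrArg (coeff (Finsupp.single 0 1 + Finsupp.single 1 1)) hz
    rw [coeff_zero] at this
    rw [← this]
    simp [X, monomial_mul, coeff_monomial, coeff_C, Finsupp.ext_iff]
  · apply hb
    have := congrArg (coeff 0) hz
    rw [coeff_zero] at this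
    rw [← this]
    simp [X, monomial_mul, coeff_monomial, coeff_C, Finsupp.ext_iff]

lemma nzV (a b : k) (h : ¬ (a = 0 ∧ b = 0)) : cst k a * vGen k + cst k b ≠ 0 := by
  have heq : cst k a * vGen k + cst k b
      = algebraMap (MvPolynomial (Fin 2) k) (RatFunc2 k) (C a * X 1 + C b) := by
    rw [map_add, map_mul, cst_eq, cst_eq, vGen]
  rw [heq, Ne, IsFractionRing.to_map_eq_zero_iff]
  intro hz
  rcases not_and_or.mp h with ha | hb
  · apply ha
    have := congrArg (coeff (Finsupp.single 1 1)) hz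
    rw [coeff_zero] at this
    rw [← this]
    simp [X, monomial_mul, coeff_monomial, coeff_C, Finsupp.ext_iff]
  · apply hb
    have := congrArg (coeff 0) hz
    rw [coeff_zero] at this
    rw [← this]
    simp [X, monomial_mul, coeff_monomial, coeff_C, Finsupp.ext_iff]

lemma hUne : uGen k ≠ 0 := by
  rw [uGen, Ne, IsFractionRing.to_map_eq_zero_iff]
  exact X_ne_zero 0

lemma hVne : vGen k ≠ 0 := by
  rw [vGen, Ne, IsFractionRing.to_map_eq_zero_iff]
  exact X_ne_zero 1

lemma key (a b : k) (A : RatFunc2 k) (hA : A ≠ 0)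
    (h1 : cst k a * A + cst k b ≠ 0) (h2 : cst k b * A + cst k a ≠ 0) :
    (cst k a * A⁻¹ + cst k b) / (cst k b * A⁻¹ + cst k a)
      = ((cst k a * A + cst k b) / (cst k b * A + cst k a))⁻¹ := by
  rw [inv_div]
  rw [div_eq_div_iff ?h h1]
  case h =>
    intro hz
    apply h1
    have : (cst k b * A⁻¹ + cst k a) * A = cst k a * A + cst k b := by
      field_simp
      ring
    rw [← this, hz, zero_mul]
  field_simp
  ring

lemma map_cst (e : RatFunc2 k ≃ₐ[k] RatFunc2 k) (a : k) : e (cst k a) = cst k a := by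
  simp [cst]


theorem psi_commutes_with_phi (γ δ ε ζ : k)
    (hγδ : γ ^ 2 ≠ δ ^ 2) (hεζ : ε ^ 2 ≠ ζ ^ 2)
    (ψ σ τ : RatFunc2 k ≃ₐ[k] RatFunc2 k)
    (hψu : ψ (uGen k) = (uGen k)⁻¹) (hψv : ψ (vGen k) = (vGen k)⁻¹)
    (hσu : σ (uGen k) = uGen k * vGen k) (hσv : σ (vGen k) = vGen k)
    (hτu : τ (uGen k) =
      (cst k γ * uGen k + cst k δ) / (cst k δ * uGen k + cst k γ))
    (hτv : τ (vGen k) =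
      (cst k ε * vGen k + cst k ζ) / (cst k ζ * vGen k + cst k ε)) :
    ∀ x : RatFunc2 k, ψ (σ (τ x)) = σ (τ (ψ x)) := by
  have hgd : ¬ (γ = 0 ∧ δ = 0) := by
    rintro ⟨rfl, rfl⟩; exact hγδ rfl
  have hgd' : ¬ (δ = 0 ∧ γ = 0) := fun ⟨h1, h2⟩ => hgd ⟨h2, h1⟩
  have hez : ¬ (ε = 0 ∧ ζ = 0) := by
    rintro ⟨rfl, rfl⟩; exact hεζ rfl
  have hez' : ¬ (ζ = 0 ∧ ε = 0) := fun ⟨h1, h2⟩ => hez ⟨h2, h1⟩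
  have hu : ψ (σ (τ (uGen k))) = σ (τ (ψ (uGen k))) := by
    simp only [hψu, map_inv₀, hτu, map_div₀, map_add, map_mul, map_cst, hσu, hσv, hψv]
    rw [← mul_inv]
    exact key k γ δ (uGen k * vGen k) (mul_ne_zero (hUne k) (hVne k))
      (nzUV k γ δ hgd) (nzUV k δ γ hgd')
  have hv : ψ (σ (τ (vGen k))) = σ (τ (ψ (vGen k))) := by
    simp only [hψv, map_inv₀, hτv, map_div₀, map_add, map_mul, map_cst, hσv]
    exact key k ε ζ (vGen k) (hVne k) (nzV k ε ζ hez) (nzV k ζ ε hez')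
  have main : (ψ.toAlgHom.comp (σ.toAlgHom.comp τ.toAlgHom))
      = (σ.toAlgHom.comp (τ.toAlgHom.comp ψ.toAlgHom)) := by
    apply AlgHom.coe_ringHom_injective
    apply IsLocalization.ringHom_ext (nonZeroDivisors (MvPolynomial (Fin 2) k))
    apply MvPolynomial.ringHom_ext
    · intro r
      simp only [RingHom.comp_apply]
      rw [← cst_eq]
      simp [map_cst]
    · intro i
      fin_cases i
      · simpa [uGen] using hu
      · simpa [vGen] using hv
  intro x
  exact DFunLike.congr_fun main x
end
end

section
/- Let k be a field and S = k⟨x₁,x₂,x₃,x₄⟩/(f₁,…,f₆) with the six quadratic relations f₁ = x₃x₁ - x₁x₃, f₂ = x₃x₂ - x₁x₄, f₃ = x₄x₁ - x₂x₃, f₄ = x₄x₂ - x₂x₄, f₅ = x₁x₂ - x₂x₃, f₆ = x₄x₃ - x₁x₄. Then the set of words {x₂^i x₁^j x₃^k x₄^ℓ : i,j,k,ℓ ≥ 0} is a k-basis of S; in particular the Hilbert series of S is 1/(1-s)⁴. -/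
/- k is a field; k⟨x₁,x₂,x₃,x₄⟩ is the free associative k-algebra on four
generators (each of degree 1); S is the quotient by the two-sided ideal
generated by the six quadratic elements
f₁ = x₃x₁-x₁x₃, f₂ = x₃x₂-x₁x₄, f₃ = x₄x₁-x₂x₃, f₄ = x₄x₂-x₂x₄,
f₅ = x₁x₂-x₂x₃, f₆ = x₄x₃-x₁x₄.
Then the set of words {x₂^i x₁^j x₃^k x₄^ℓ : i,j,k,ℓ ≥ 0} is a k-basis of S;
in particular the Hilbert series of S is 1/(1-s)⁴, i.e. the degree-n
component of S (the span of the images of the words of length n in the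
generators) has dimension C(n+3,3). -/

noncomputable section

variable (k : Type*) [Field k]

/-- The six quadratic relations, with x₁,x₂,x₃,x₄ indexed by 0,1,2,3. -/
inductive SRel : FreeAlgebra k (Fin 4) → FreeAlgebra k (Fin 4) → Prop
  | f1 : SRel (FreeAlgebra.ι k 2 * FreeAlgebra.ι k 0) (FreeAlgebra.ι k 0 * FreeAlgebra.ι k 2)
  | f2 : SRel (FreeAlgebra.ι k 2 * FreeAlgebra.ι k 1) (FreeAlgebra.ι k 0 * FreeAlgebra.ι k 3)
  | f3 : SRel (FreeAlgebra.ι k 3 * FreeAlgebra.ι k 0) (FreeAlgebra.ι k 1 * FreeAlgebra.ι k 2)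
  | f4 : SRel (FreeAlgebra.ι k 3 * FreeAlgebra.ι k 1) (FreeAlgebra.ι k 1 * FreeAlgebra.ι k 3)
  | f5 : SRel (FreeAlgebra.ι k 0 * FreeAlgebra.ι k 1) (FreeAlgebra.ι k 1 * FreeAlgebra.ι k 2)
  | f6 : SRel (FreeAlgebra.ι k 3 * FreeAlgebra.ι k 2) (FreeAlgebra.ι k 0 * FreeAlgebra.ι k 3)

/-- S = k⟨x₁,x₂,x₃,x₄⟩/(f₁,…,f₆). -/
abbrev SAlg := RingQuot (SRel k)

/-- The images x₁, x₂, x₃, x₄ of the generators in S. -/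
def xS (i : Fin 4) : SAlg k := RingQuot.mkAlgHom k (SRel k) (FreeAlgebra.ι k i)

/-! ### Auxiliary development -/

/-- The normal-form monomial `x₂^i x₁^j x₃^k x₄^ℓ`. -/
def Nm (m : ℕ × ℕ × ℕ × ℕ) : SAlg k :=
  xS k 1 ^ m.1 * xS k 0 ^ m.2.1 * xS k 2 ^ m.2.2.1 * xS k 3 ^ m.2.2.2

/-- Total degree of a monomial. -/
def wt (m : ℕ × ℕ × ℕ × ℕ) : ℕ := m.1 + m.2.1 + m.2.2.1 + m.2.2.2

/-- Decoding of the `(p,q,w)` coordinates into a monomial exponent vector. -/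
def dec (p q w : ℕ) : ℕ × ℕ × ℕ × ℕ :=
  (w / (p + 1), w % (p + 1), p - w % (p + 1), q - w / (p + 1))

/-- Encoding of an exponent vector. -/
def enc (m : ℕ × ℕ × ℕ × ℕ) : ℕ × ℕ × ℕ :=
  (m.2.1 + m.2.2.1, m.1 + m.2.2.2, m.1 * (m.2.1 + m.2.2.1 + 1) + m.2.1)

/-- The normal-form monomial attached to encoded coordinates. -/
def NW (p q w : ℕ) : SAlg k := Nm k (dec p q w)

section Rels

lemma relCA : xS k 2 * xS k 0 = xS k 0 * xS k 2 := by
  simpa only [map_mul, xS] using RingQuot.mkAlgHom_rel k (SRel.f1 (k := k))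

lemma relCB : xS k 2 * xS k 1 = xS k 0 * xS k 3 := by
  simpa only [map_mul, xS] using RingQuot.mkAlgHom_rel k (SRel.f2 (k := k))

lemma relDA : xS k 3 * xS k 0 = xS k 1 * xS k 2 := by
  simpa only [map_mul, xS] using RingQuot.mkAlgHom_rel k (SRel.f3 (k := k))

lemma relDB : xS k 3 * xS k 1 = xS k 1 * xS k 3 := by
  simpa only [map_mul, xS] using RingQuot.mkAlgHom_rel k (SRel.f4 (k := k))

lemma relAB : xS k 0 * xS k 1 = xS k 1 * xS k 2 := by
  simpa only [map_mul, xS] using RingQuot.mkAlgHom_rel k (SRel.f5 (k := k))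

lemma relDC : xS k 3 * xS k 2 = xS k 0 * xS k 3 := by
  simpa only [map_mul, xS] using RingQuot.mkAlgHom_rel k (SRel.f6 (k := k))

lemma ca_pow (n : ℕ) : xS k 2 * xS k 0 ^ n = xS k 0 ^ n * xS k 2 := by
  induction n with
  | zero => simp
  | succ n ih =>
    rw [pow_succ', ← mul_assoc, relCA, mul_assoc, ih, mul_assoc]

lemma dc_pow (n : ℕ) : xS k 3 * xS k 2 ^ n = xS k 0 ^ n * xS k 3 := by
  induction n with
  | zero => simp
  | succ n ih =>
    rw [pow_succ', ← mul_assoc, relDC, mul_assoc, ih, pow_succ', mul_assoc]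

lemma swapDA (X : SAlg k) : xS k 3 * (xS k 0 * X) = xS k 1 * (xS k 2 * X) := by
  rw [← mul_assoc, relDA, mul_assoc]

lemma swapAB (X : SAlg k) : xS k 0 * (xS k 1 * X) = xS k 1 * (xS k 2 * X) := by
  rw [← mul_assoc, relAB, mul_assoc]

lemma swapCB (X : SAlg k) : xS k 2 * (xS k 1 * X) = xS k 0 * (xS k 3 * X) := by
  rw [← mul_assoc, relCB, mul_assoc]

lemma swapDB (X : SAlg k) : xS k 3 * (xS k 1 * X) = xS k 1 * (xS k 3 * X) := by
  rw [← mul_assoc, relDB, mul_assoc]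

lemma swapCApow (n : ℕ) (X : SAlg k) :
    xS k 2 * (xS k 0 ^ n * X) = xS k 0 ^ n * (xS k 2 * X) := by
  rw [← mul_assoc, ca_pow, mul_assoc]

lemma swapDCpow (n : ℕ) (X : SAlg k) :
    xS k 3 * (xS k 2 ^ n * X) = xS k 0 ^ n * (xS k 3 * X) := by
  rw [← mul_assoc, dc_pow, mul_assoc]

end Rels

lemma NmB (i j kk l : ℕ) : xS k 1 * Nm k (i, j, kk, l) = Nm k (i + 1, j, kk, l) := by
  simp only [Nm, pow_succ', mul_assoc]

lemma dec_small (p q w : ℕ) (h : w ≤ p) : dec p q w = (0, w, p - w, q) := by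
  have h1 : w % (p + 1) = w := Nat.mod_eq_of_lt (by omega)
  have h2 : w / (p + 1) = 0 := Nat.div_eq_of_lt (by omega)
  simp [dec, h1, h2]

lemma claimB (p q w : ℕ) : xS k 1 * NW k p q w = NW k p (q + 1) (w + (p + 1)) := by
  have h1 : (w + (p + 1)) / (p + 1) = w / (p + 1) + 1 := Nat.add_div_right _ (Nat.succ_pos p)
  have h2 : (w + (p + 1)) % (p + 1) = w % (p + 1) := Nat.add_mod_right _ _
  have h3 : (q + 1) - (w / (p + 1) + 1) = q - w / (p + 1) := Nat.succ_sub_succ _ _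
  simp only [NW, dec, h1, h2, h3]
  exact NmB k _ _ _ _

lemma claims : ∀ w p q : ℕ, w ≤ q * (p + 1) + p →
    (xS k 0 * NW k p q w = NW k (p + 1) q (w + 1)) ∧
    (xS k 2 * NW k p q w = NW k (p + 1) q w) ∧
    (xS k 3 * NW k p q w = NW k p (q + 1) (w + p)) := by
  intro w
  induction w using Nat.strong_induction_on with
  | _ w IH =>
  intro p q hv
  rcases le_or_gt w p with hw | hw
  · -- base case: no `x₂` in the normal form
    have hd : NW k p q w = Nm k (0, w, p - w, q) := by rw [NW, dec_small _ _ _ hw]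
    refine ⟨?_, ?_, ?_⟩
    · have hd' : NW k (p + 1) q (w + 1) = Nm k (0, w + 1, p - w, q) := by
        rw [NW, dec_small _ _ _ (by omega), Nat.succ_sub_succ]
      rw [hd, hd']
      simp only [Nm, pow_zero, one_mul, pow_succ', mul_assoc]
    · have hd' : NW k (p + 1) q w = Nm k (0, w, p - w + 1, q) := by
        rw [NW, dec_small _ _ _ (by omega)]
        have : p + 1 - w = p - w + 1 := by omega
        rw [this]
      rw [hd, hd']
      simp only [Nm, pow_zero, one_mul, mul_assoc]
      rw [swapCApow, ← mul_assoc (xS k 2), ← pow_succ']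
    · rcases w with _ | j
      · have hd' : NW k p (q + 1) (0 + p) = Nm k (0, p, 0, q + 1) := by
          rw [NW, zero_add, dec_small _ _ _ le_rfl, Nat.sub_self]
        rw [hd, hd']
        simp only [Nm, pow_zero, one_mul, Nat.sub_zero, mul_one, mul_assoc]
        rw [swapDCpow, ← pow_succ']
      · -- w = j+1 ≤ p
        have hd' : NW k p (q + 1) (j + 1 + p) = Nm k (1, j, p - (j + 1) + 1, q) := by
          have e : j + 1 + p = j + (p + 1) := by omega
          rw [NW, e]
          have h1 : (j + (p + 1)) / (p + 1) = 1 := by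
            rw [Nat.add_div_right _ (Nat.succ_pos p), Nat.div_eq_of_lt (by omega)]
          have h2 : (j + (p + 1)) % (p + 1) = j := by
            rw [Nat.add_mod_right, Nat.mod_eq_of_lt (by omega)]
          simp only [dec, h1, h2]
          have h3 : p - j = p - (j + 1) + 1 := by omega
          have h4 : q + 1 - 1 = q := by omega
          rw [h3, h4]
        rw [hd, hd']
        simp only [Nm, pow_zero, one_mul, pow_one, mul_assoc, pow_succ' (xS k 0) j]
        rw [swapDA, swapCApow, ← mul_assoc (xS k 2), ← pow_succ']
  · -- inductive case : w ≥ p+1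
    obtain ⟨q', rfl⟩ : ∃ q', q = q' + 1 := by
      rcases q with _ | q'
      · exfalso
        simp only [Nat.zero_mul, Nat.zero_add] at hv
        omega
      · exact ⟨q', rfl⟩
    obtain ⟨w', rfl⟩ : ∃ w', w = w' + (p + 1) := ⟨w - (p + 1), by omega⟩
    have hexp : (q' + 1) * (p + 1) = q' * (p + 1) + (p + 1) := by ring
    have hv' : w' ≤ q' * (p + 1) + p := by omega
    have hkey : NW k p (q' + 1) (w' + (p + 1)) = xS k 1 * NW k p q' w' :=
      (claimB k p q' w').symm
    have hIH := IH w' (by omega) p q' hv'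
    refine ⟨?_, ?_, ?_⟩
    · rw [hkey, swapAB, hIH.2.1, claimB]
      congr 1
    · rw [hkey, swapCB, hIH.2.2]
      have hIH2 := IH (w' + p) (by omega) p (q' + 1) (by omega)
      rw [hIH2.1]
      congr 1
    · rw [hkey, swapDB, hIH.2.2, claimB]
      congr 1
      omega

lemma dec_enc (m : ℕ × ℕ × ℕ × ℕ) : dec (enc m).1 (enc m).2.1 (enc m).2.2 = m := by
  obtain ⟨i, j, kk, l⟩ := m
  simp only [enc, dec]
  have hc : i * (j + kk + 1) = (j + kk + 1) * i := Nat.mul_comm _ _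
  have h1 : (i * (j + kk + 1) + j) % (j + kk + 1) = j := by
    rw [hc, Nat.mul_add_mod, Nat.mod_eq_of_lt (by omega)]
  have h2 : (i * (j + kk + 1) + j) / (j + kk + 1) = i := by
    rw [hc, Nat.mul_add_div (by omega), Nat.div_eq_of_lt (by omega), Nat.add_zero]
  rw [h1, h2]
  simp only [Prod.mk.injEq]
  exact ⟨trivial, trivial, by omega, by omega⟩

lemma enc_valid (m : ℕ × ℕ × ℕ × ℕ) :
    (enc m).2.2 ≤ (enc m).2.1 * ((enc m).1 + 1) + (enc m).1 := by
  obtain ⟨i, j, kk, l⟩ := m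
  simp only [enc]
  have : i * (j + kk + 1) ≤ (i + l) * (j + kk + 1) := Nat.mul_le_mul_right _ (by omega)
  omega

lemma wt_dec (p q w : ℕ) (h : w ≤ q * (p + 1) + p) : wt (dec p q w) = p + q := by
  have hj : w % (p + 1) ≤ p := by
    have := Nat.mod_lt w (y := p + 1) (by omega); omega
  have hi : w / (p + 1) ≤ q := by
    have hlt : w < (q + 1) * (p + 1) := by
      have : (q + 1) * (p + 1) = q * (p + 1) + (p + 1) := by ring
      omega
    have := (Nat.div_lt_iff_lt_mul (show 0 < p + 1 by omega)).mpr hlt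
    omega
  simp only [wt, dec]
  omega

/-- Left multiplication by a generator sends a normal monomial to a normal monomial of
degree one higher. -/
lemma step (g : Fin 4) (m : ℕ × ℕ × ℕ × ℕ) :
    ∃ m', xS k g * Nm k m = Nm k m' ∧ wt m' = wt m + 1 := by
  obtain ⟨i, j, kk, l⟩ := m
  set p := j + kk with hp
  set q := i + l with hq
  set w := i * (p + 1) + j with hwdef
  have hNW : NW k p q w = Nm k (i, j, kk, l) := by
    rw [NW]
    exact congrArg (Nm k) (dec_enc (i, j, kk, l))
  have hv : w ≤ q * (p + 1) + p := enc_valid (i, j, kk, l)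
  have hwt : wt (i, j, kk, l) = p + q := by simp only [wt]; omega
  have hC := claims k w p q hv
  fin_cases g
  · refine ⟨dec (p + 1) q (w + 1), ?_, ?_⟩
    · rw [← hNW]
      exact hC.1
    · have hv2 : w + 1 ≤ q * (p + 1 + 1) + (p + 1) := by
        have hmono : q * (p + 1) ≤ q * (p + 1 + 1) := Nat.mul_le_mul_left _ (by omega)
        omega
      rw [wt_dec _ _ _ hv2, hwt]; omega
  · refine ⟨dec p (q + 1) (w + (p + 1)), ?_, ?_⟩
    · rw [← hNW]
      exact claimB k p q w
    · have hv2 : w + (p + 1) ≤ (q + 1) * (p + 1) + p := by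
        have : (q + 1) * (p + 1) = q * (p + 1) + (p + 1) := by ring
        omega
      rw [wt_dec _ _ _ hv2, hwt]; omega
  · refine ⟨dec (p + 1) q w, ?_, ?_⟩
    · rw [← hNW]
      exact hC.2.1
    · have hv2 : w ≤ q * (p + 1 + 1) + (p + 1) := by
        have hmono : q * (p + 1) ≤ q * (p + 1 + 1) := Nat.mul_le_mul_left _ (by omega)
        omega
      rw [wt_dec _ _ _ hv2, hwt]; omega
  · refine ⟨dec p (q + 1) (w + p), ?_, ?_⟩
    · rw [← hNW]
      exact hC.2.2
    · have hv2 : w + p ≤ (q + 1) * (p + 1) + p := by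
        have : (q + 1) * (p + 1) = q * (p + 1) + (p + 1) := by ring
        omega
      rw [wt_dec _ _ _ hv2, hwt]; omega

/-! ### The faithful representation -/

/-- The model space on which `S` acts faithfully. -/
abbrev VMod := (ℕ × ℕ × ℕ) →₀ k

def gA : ℕ × ℕ × ℕ → ℕ × ℕ × ℕ := fun s => (s.1 + 1, s.2.1, s.2.2 + 1)
def gB : ℕ × ℕ × ℕ → ℕ × ℕ × ℕ := fun s => (s.1, s.2.1 + 1, s.2.2 + s.1 + 1)
def gC : ℕ × ℕ × ℕ → ℕ × ℕ × ℕ := fun s => (s.1 + 1, s.2.1, s.2.2)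
def gD : ℕ × ℕ × ℕ → ℕ × ℕ × ℕ := fun s => (s.1, s.2.1 + 1, s.2.2 + s.1)

def gact (i : Fin 4) : ℕ × ℕ × ℕ → ℕ × ℕ × ℕ :=
  if i = 0 then gA else if i = 1 then gB else if i = 2 then gC else gD

/-- The action of a generator on the model space. -/
def Tact (i : Fin 4) : Module.End k (VMod k) := Finsupp.lmapDomain k k (gact i)

lemma gact0 : gact 0 = gA := by simp [gact]
lemma gact1 : gact 1 = gB := by simp [gact]
lemma gact2 : gact 2 = gC := by simp [gact]
lemma gact3 : gact 3 = gD := by simp [gact]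

/-- The algebra map from the free algebra to endomorphisms of the model. -/
def φF : FreeAlgebra k (Fin 4) →ₐ[k] Module.End k (VMod k) :=
  FreeAlgebra.lift k (fun i => Tact k i)

lemma key_mul (f g f' g' : ℕ × ℕ × ℕ → ℕ × ℕ × ℕ) (hfg : ∀ s, f (g s) = f' (g' s)) :
    ((Finsupp.lmapDomain k k f) * (Finsupp.lmapDomain k k g) : Module.End k (VMod k)) =
      (Finsupp.lmapDomain k k f') * (Finsupp.lmapDomain k k g') := by
  simp only [Module.End.mul_eq_comp, ← Finsupp.lmapDomain_comp]
  congr 1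
  funext s
  exact hfg s

lemma φF_rel : ∀ ⦃x y : FreeAlgebra k (Fin 4)⦄, SRel k x y → φF k x = φF k y := by
  intro x y h
  cases h <;>
    · simp only [φF, map_mul, FreeAlgebra.lift_ι_apply, Tact]
      refine key_mul k _ _ _ _ fun s => ?_
      obtain ⟨p, q, w⟩ := s
      first
      | rfl
      | (simp only [gact0, gact1, gact2, gact3, gA, gB, gC, gD, Prod.mk.injEq]) <;>
          (first | trivial | (refine ⟨?_, ?_, ?_⟩ <;> first | trivial | omega | ring))

/-- The representation of `S`. -/
def ΦS : SAlg k →ₐ[k] Module.End k (VMod k) :=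
  RingQuot.liftAlgHom k ⟨φF k, φF_rel k⟩

lemma ΦS_x (g : Fin 4) : ΦS k (xS k g) = Tact k g := by
  rw [ΦS, xS, RingQuot.liftAlgHom_mkAlgHom_apply]
  exact FreeAlgebra.lift_ι_apply _ _

lemma Tact_pow_single (g : Fin 4) (n : ℕ) (x : ℕ × ℕ × ℕ) :
    ((Tact k g) ^ n) (Finsupp.single x (1 : k)) =
      Finsupp.single ((gact g)^[n] x) (1 : k) := by
  induction n with
  | zero => simp
  | succ n ih =>
    rw [pow_succ', Module.End.mul_apply, ih, Function.iterate_succ_apply']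
    rw [Tact, Finsupp.lmapDomain_apply, Finsupp.mapDomain_single]

lemma itD (l : ℕ) : (gact 3)^[l] (0, 0, 0) = (0, l, 0) := by
  induction l with
  | zero => rfl
  | succ l ih =>
    rw [Function.iterate_succ_apply', ih, gact3]
    simp [gD]

lemma itC (kk l : ℕ) : (gact 2)^[kk] (0, l, 0) = (kk, l, 0) := by
  induction kk with
  | zero => rfl
  | succ kk ih =>
    rw [Function.iterate_succ_apply', ih, gact2]
    simp [gC]

lemma itA (j kk l : ℕ) : (gact 0)^[j] (kk, l, 0) = (kk + j, l, j) := by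
  induction j with
  | zero => rfl
  | succ j ih =>
    rw [Function.iterate_succ_apply', ih, gact0]
    first
    | rfl
    | (simp only [gA, Prod.mk.injEq]) <;> (first | trivial | (refine ⟨?_, ?_, ?_⟩ <;> first | trivial | omega | ring))

lemma itB (i p q w : ℕ) : (gact 1)^[i] (p, q, w) = (p, q + i, w + i * (p + 1)) := by
  induction i with
  | zero => simp
  | succ i ih =>
    rw [Function.iterate_succ_apply', ih, gact1]
    first
    | rfl
    | (simp only [gB, Prod.mk.injEq]) <;> (first | trivial | (refine ⟨?_, ?_, ?_⟩ <;> first | trivial | omega | ring))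

lemma ΦS_Nm (m : ℕ × ℕ × ℕ × ℕ) :
    (ΦS k (Nm k m)) (Finsupp.single (0, 0, 0) (1 : k)) =
      Finsupp.single (enc m) (1 : k) := by
  obtain ⟨i, j, kk, l⟩ := m
  simp only [Nm, map_mul, map_pow, ΦS_x, Module.End.mul_apply]
  rw [Tact_pow_single, Tact_pow_single, Tact_pow_single, Tact_pow_single]
  rw [itD, itC, itA, itB]
  congr 1
  (simp only [enc, Prod.mk.injEq]) <;> (first | trivial | (refine ⟨?_, ?_, ?_⟩ <;> first | trivial | omega | ring))

lemma enc_inj : Function.Injective enc := by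
  intro m m' h
  have := dec_enc m
  rw [h, dec_enc m'] at this
  exact this.symm

lemma Nm_indep : LinearIndependent k (Nm k) := by
  let Ψ : SAlg k →ₗ[k] VMod k :=
    { toFun := fun s => (ΦS k s) (Finsupp.single (0, 0, 0) (1 : k))
      map_add' := fun a b => by simp only [map_add, LinearMap.add_apply]
      map_smul' := fun c a => by simp only [map_smul, LinearMap.smul_apply, RingHom.id_apply] }
  have hsingles : LinearIndependent k fun m : ℕ × ℕ × ℕ × ℕ =>
      Finsupp.single (enc m) (1 : k) := by
    have hb := (Finsupp.basisSingleOne (R := k) (ι := ℕ × ℕ × ℕ)).linearIndependent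
    have h2 := hb.comp enc enc_inj
    have he : (⇑(Finsupp.basisSingleOne (R := k) (ι := ℕ × ℕ × ℕ)) ∘ enc) =
        fun m : ℕ × ℕ × ℕ × ℕ => Finsupp.single (enc m) (1 : k) := by
      funext m
      simp [Function.comp, Finsupp.coe_basisSingleOne]
    rwa [he] at h2
  refine LinearIndependent.of_comp Ψ ?_
  have he2 : (⇑Ψ ∘ Nm k) = fun m : ℕ × ℕ × ℕ × ℕ => Finsupp.single (enc m) (1 : k) := by
    funext m
    exact ΦS_Nm k m
  rwa [he2]

/-! ### Spanning -/

def TT : Submodule k (SAlg k) := Submodule.span k (Set.range (Nm k))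

lemma one_mem_TT : (1 : SAlg k) ∈ TT k := by
  have : Nm k (0, 0, 0, 0) = 1 := by simp [Nm]
  rw [← this]
  exact Submodule.subset_span ⟨_, rfl⟩

lemma gen_mem_TT (g : Fin 4) : ∀ x ∈ TT k, xS k g * x ∈ TT k := by
  intro x hx
  induction hx using Submodule.span_induction with
  | mem y hy =>
    obtain ⟨m, rfl⟩ := hy
    obtain ⟨m', hm, _⟩ := step k g m
    rw [hm]
    exact Submodule.subset_span ⟨_, rfl⟩
  | zero => rw [mul_zero]; exact (TT k).zero_mem
  | add y z _ _ hy hz => rw [mul_add]; exact (TT k).add_mem hy hz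
  | smul c y _ hy => rw [mul_smul_comm]; exact (TT k).smul_mem c hy

lemma list_mem_TT (L : List (Fin 4)) : ∀ x ∈ TT k, (L.map (xS k)).prod * x ∈ TT k := by
  induction L with
  | nil => intro x hx; simpa using hx
  | cons g L ih =>
    intro x hx
    rw [List.map_cons, List.prod_cons, mul_assoc]
    exact gen_mem_TT k g _ (ih x hx)

def wordL (m : ℕ × ℕ × ℕ × ℕ) : List (Fin 4) :=
  List.replicate m.1 1 ++ List.replicate m.2.1 0 ++
    List.replicate m.2.2.1 2 ++ List.replicate m.2.2.2 3

lemma wordL_prod (m : ℕ × ℕ × ℕ × ℕ) : ((wordL m).map (xS k)).prod = Nm k m := by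
  simp [wordL, Nm, List.map_append, List.prod_append, List.map_replicate,
    List.prod_replicate, mul_assoc]

lemma wordL_length (m : ℕ × ℕ × ℕ × ℕ) : (wordL m).length = wt m := by
  simp only [wordL, List.length_append, List.length_replicate, wt]

lemma mul_mem_TT : ∀ x ∈ TT k, ∀ y ∈ TT k, x * y ∈ TT k := by
  intro x hx
  induction hx using Submodule.span_induction with
  | mem u hu =>
    obtain ⟨m, rfl⟩ := hu
    intro y hy
    rw [← wordL_prod]
    exact list_mem_TT k _ y hy
  | zero => intro y hy; rw [zero_mul]; exact (TT k).zero_mem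
  | add u v _ _ hu hv => intro y hy; rw [add_mul]; exact (TT k).add_mem (hu y hy) (hv y hy)
  | smul c u _ hu => intro y hy; rw [smul_mul_assoc]; exact (TT k).smul_mem c (hu y hy)

lemma TT_top : ∀ x : SAlg k, x ∈ TT k := by
  intro x
  obtain ⟨y, rfl⟩ := RingQuot.mkAlgHom_surjective k (SRel k) x
  induction y using FreeAlgebra.induction with
  | grade0 r =>
    rw [AlgHom.commutes, Algebra.algebraMap_eq_smul_one]
    exact (TT k).smul_mem r (one_mem_TT k)
  | grade1 g =>
    have : RingQuot.mkAlgHom k (SRel k) (FreeAlgebra.ι k g) = xS k g * 1 := by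
      rw [mul_one]; rfl
    rw [this]
    exact gen_mem_TT k g 1 (one_mem_TT k)
  | mul a b ha hb => rw [map_mul]; exact mul_mem_TT k _ ha _ hb
  | add a b ha hb => rw [map_add]; exact (TT k).add_mem ha hb

/-! ### Counting -/

def mTo (m : ℕ × ℕ × ℕ × ℕ) : Multiset (Fin 4) :=
  Multiset.replicate m.1 1 + Multiset.replicate m.2.1 0 +
    Multiset.replicate m.2.2.1 2 + Multiset.replicate m.2.2.2 3

def mOf (s : Multiset (Fin 4)) : ℕ × ℕ × ℕ × ℕ :=
  (s.count 1, s.count 0, s.count 2, s.count 3)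

lemma mOf_mTo (m : ℕ × ℕ × ℕ × ℕ) : mOf (mTo m) = m := by
  obtain ⟨i, j, kk, l⟩ := m
  simp [mOf, mTo, Multiset.count_replicate]

lemma mTo_mOf : ∀ s : Multiset (Fin 4), mTo (mOf s) = s := by
  intro s
  induction s using Multiset.induction with
  | empty => simp [mTo, mOf]
  | cons a t ih =>
    have ha : mTo (mOf (a ::ₘ t)) = a ::ₘ mTo (mOf t) := by
      fin_cases a <;>
        simp [mTo, mOf, Multiset.count_cons, Multiset.replicate_succ,
          Multiset.cons_add, Multiset.add_cons]
    rw [ha, ih]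

lemma card_mTo (m : ℕ × ℕ × ℕ × ℕ) : Multiset.card (mTo m) = wt m := by
  simp [mTo, wt]

def symEquiv (n : ℕ) : {m : ℕ × ℕ × ℕ × ℕ // wt m = n} ≃ Sym (Fin 4) n where
  toFun m := ⟨mTo m.1, by rw [card_mTo, m.2]⟩
  invFun s := ⟨mOf s.1, by
    have h := congrArg Multiset.card (mTo_mOf s.1)
    rw [card_mTo] at h
    rw [h, s.2]⟩
  left_inv m := Subtype.ext (mOf_mTo m.1)
  right_inv s := Subtype.ext (mTo_mOf s.1)

instance fintypeWt (n : ℕ) : Fintype {m : ℕ × ℕ × ℕ × ℕ // wt m = n} :=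
  Fintype.ofEquiv _ (symEquiv n).symm

lemma card_wt (n : ℕ) :
    Fintype.card {m : ℕ × ℕ × ℕ × ℕ // wt m = n} = (n + 3).choose 3 := by
  rw [Fintype.card_congr (symEquiv n), Sym.card_sym_eq_choose, Fintype.card_fin]
  have h1 : 4 + n - 1 = n + 3 := by omega
  rw [h1]
  have h2 := Nat.choose_symm (show 3 ≤ n + 3 by omega)
  simpa using h2

/-! ### Degree-`n` pieces -/

lemma word_eq : ∀ (n : ℕ) (f : Fin n → Fin 4),
    ∃ m, wt m = n ∧ (List.ofFn fun j => xS k (f j)).prod = Nm k m := by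
  intro n
  induction n with
  | zero =>
    intro f
    exact ⟨(0, 0, 0, 0), rfl, by simp [Nm]⟩
  | succ n ih =>
    intro f
    obtain ⟨m, hm, he⟩ := ih (fun j => f j.succ)
    obtain ⟨m', he', hwt'⟩ := step k (f 0) m
    refine ⟨m', by omega, ?_⟩
    rw [List.ofFn_succ, List.prod_cons, he, he']

lemma prod_mem_span (L : List (Fin 4)) :
    (L.map (xS k)).prod ∈ Submodule.span k
      (Set.range fun f : Fin L.length → Fin 4 => (List.ofFn fun j => xS k (f j)).prod) := by
  apply Submodule.subset_span
  refine ⟨fun j => L.get j, ?_⟩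
  show (List.ofFn fun j => xS k (L.get j)).prod = (L.map (xS k)).prod
  refine congrArg List.prod ?_
  simp only [List.get_eq_getElem]
  exact List.ofFn_getElem_eq_map L (xS k)

lemma span_deg (n : ℕ) :
    Submodule.span k
        (Set.range fun l : Fin n → Fin 4 => (List.ofFn fun j => xS k (l j)).prod) =
      Submodule.span k
        (Set.range fun s : {m : ℕ × ℕ × ℕ × ℕ // wt m = n} => Nm k s.1) := by
  apply le_antisymm
  · rw [Submodule.span_le]
    rintro _ ⟨f, rfl⟩
    dsimp only
    obtain ⟨m, hm, he⟩ := word_eq k n f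
    rw [he]
    exact Submodule.subset_span ⟨⟨m, hm⟩, rfl⟩
  · rw [Submodule.span_le]
    rintro _ ⟨⟨m, hm⟩, rfl⟩
    show Nm k m ∈ _
    rw [← wordL_prod]
    have hgen : ∀ nn, (wordL m).length = nn →
        ((wordL m).map (xS k)).prod ∈ Submodule.span k
          (Set.range fun l : Fin nn → Fin 4 => (List.ofFn fun j => xS k (l j)).prod) := by
      rintro nn rfl
      exact prod_mem_span k (wordL m)
    exact hgen n (by rw [wordL_length, hm])

theorem SAlg_word_basis :
    (LinearIndependent k fun m : ℕ × ℕ × ℕ × ℕ =>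
        xS k 1 ^ m.1 * xS k 0 ^ m.2.1 * xS k 2 ^ m.2.2.1 * xS k 3 ^ m.2.2.2) ∧
    (Submodule.span k (Set.range fun m : ℕ × ℕ × ℕ × ℕ =>
        xS k 1 ^ m.1 * xS k 0 ^ m.2.1 * xS k 2 ^ m.2.2.1 * xS k 3 ^ m.2.2.2) = ⊤) ∧
    ∀ n : ℕ,
      Module.finrank k (Submodule.span k
        (Set.range fun l : Fin n → Fin 4 => (List.ofFn fun j => xS k (l j)).prod)) =
      Nat.choose (n + 3) 3 := by
  refine ⟨Nm_indep k, ?_, ?_⟩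
  · rw [eq_top_iff]
    intro x _
    exact TT_top k x
  · intro n
    rw [span_deg k n]
    have hli : LinearIndependent k (fun s : {m : ℕ × ℕ × ℕ × ℕ // wt m = n} => Nm k s.1) :=
      (Nm_indep k).comp Subtype.val Subtype.val_injective
    rw [finrank_span_eq_card hli]
    exact card_wt n
end
end

section
/- Let k be a field, ρ,θ ∈ k nonzero with ρ,θ ≠ ±1, set γ=ρ+1, δ=ρ-1, ε=θ+1, ζ=θ-1, and let φ be the automorphism of K=k(u,v) given by φ(u) = (γuv+δ)/(δuv+γ), φ(v) = (εv+ζ)/(ζv+ε). In the skew polynomial ring K[t;φ] with ta = φ(a)t, set r₁ = t, r₂ = ut, r₃ = vt, r₄ = uvt. Then the relation r₁(ζr₁ - εr₃) + r₃(εr₁ - ζr₃) = 0 holds. -/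
/- k is a field; ρ, θ ∈ k \ {0, 1, -1}; γ=ρ+1, δ=ρ-1, ε=θ+1, ζ=θ-1;
K = k(u,v); φ is the k-algebra automorphism of K with
φ(u)=(γuv+δ)/(δuv+γ), φ(v)=(εv+ζ)/(ζv+ε).  In the skew polynomial ring
K[t;φ] (axiomatized as any k-algebra T with i : K → T and t with
t·i(a) = i(φ(a))·t), setting r₁ = t, r₂ = ut, r₃ = vt, r₄ = uvt, the relation
r₁(ζr₁ - εr₃) + r₃(εr₁ - ζr₃) = 0 holds. -/

open MvPolynomial

noncomputable section

variable (k : Type*) [Field k]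

set_option maxHeartbeats 1000000 in
set_option synthInstance.maxHeartbeats 400000 in
theorem R_relation_f1 (ρ θ : k) (hρ0 : ρ ≠ 0) (hθ0 : θ ≠ 0)
    (hρ1 : ρ ≠ 1) (hθ1 : θ ≠ 1) (hρ1' : ρ ≠ -1) (hθ1' : θ ≠ -1)
    (φ : RatFunc2 k ≃ₐ[k] RatFunc2 k)
    (hφu : φ (uGen k) = (cst k (ρ + 1) * uGen k * vGen k + cst k (ρ - 1)) /
        (cst k (ρ - 1) * uGen k * vGen k + cst k (ρ + 1)))
    (hφv : φ (vGen k) = (cst k (θ + 1) * vGen k + cst k (θ - 1)) /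
        (cst k (θ - 1) * vGen k + cst k (θ + 1)))
    (T : Type*) [Ring T] [Algebra k T] (i : RatFunc2 k →ₐ[k] T) (t : T)
    (ht : ∀ a : RatFunc2 k, t * i a = i (φ a) * t) :
    let r₁ := t
    let r₃ := i (vGen k) * t
    r₁ * ((θ - 1) • r₁ - (θ + 1) • r₃) + r₃ * ((θ + 1) • r₁ - (θ - 1) • r₃) = 0 := by

  intro r₁ r₃
  have hε : (θ : k) + 1 ≠ 0 := fun h => hθ1' (eq_neg_of_add_eq_zero_left h)
  have hc : ∀ a : k, cst k a = algebraMap (MvPolynomial (Fin 2) k) (RatFunc2 k) (C a) := by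
    intro a
    rw [cst, IsScalarTower.algebraMap_apply k (MvPolynomial (Fin 2) k) (RatFunc2 k),
      MvPolynomial.algebraMap_eq]
  -- denominator nonzero
  have hD : cst k (θ - 1) * vGen k + cst k (θ + 1) ≠ 0 := by
    have heq : cst k (θ - 1) * vGen k + cst k (θ + 1) =
        algebraMap (MvPolynomial (Fin 2) k) (RatFunc2 k)
          (C (θ - 1) * X 1 + C (θ + 1)) := by
      rw [hc, hc, vGen, ← RingHom.map_mul, ← RingHom.map_add]
    rw [heq]
    intro h
    have hpoly : (C (θ - 1) * X 1 + C (θ + 1) : MvPolynomial (Fin 2) k) = 0 :=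
      IsFractionRing.injective (MvPolynomial (Fin 2) k) (RatFunc2 k)
        (by rw [RingHom.map_zero]; exact h)
    have := congrArg (eval (fun _ => (0 : k))) hpoly
    simp at this
    exact hε this
  have hφV : φ (vGen k) * (cst k (θ - 1) * vGen k + cst k (θ + 1)) =
      cst k (θ + 1) * vGen k + cst k (θ - 1) := by
    rw [hφv, div_mul_cancel₀ _ hD]
  have key : cst k (θ - 1) - cst k (θ + 1) * φ (vGen k) +
      (vGen k * cst k (θ + 1) - vGen k * (cst k (θ - 1) * φ (vGen k))) = 0 := by
    linear_combination -hφV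
  have hcomm : ∀ a : k, φ (cst k a) = cst k a := fun a => φ.commutes a
  have hsmul : ∀ (a : k) (x : T), a • x = i (cst k a) * x := fun a x => by
    rw [Algebra.smul_def, ← i.commutes a]; rfl
  have e1 : t * (i (cst k (θ - 1)) * t) = i (cst k (θ - 1)) * (t * t) := by
    rw [← mul_assoc, ht, hcomm, mul_assoc]
  have e2 : t * (i (cst k (θ + 1)) * (i (vGen k) * t)) =
      i (cst k (θ + 1) * φ (vGen k)) * (t * t) := by
    rw [← mul_assoc (i (cst k (θ + 1))), ← map_mul, ← mul_assoc t, ht]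
    simp only [map_mul, hcomm, mul_assoc]
  have e3 : i (vGen k) * t * (i (cst k (θ + 1)) * t) =
      i (vGen k * cst k (θ + 1)) * (t * t) := by
    rw [mul_assoc (i (vGen k)) t, ← mul_assoc t, ht]
    simp only [map_mul, hcomm, mul_assoc]
  have e4 : i (vGen k) * t * (i (cst k (θ - 1)) * (i (vGen k) * t)) =
      i (vGen k * (cst k (θ - 1) * φ (vGen k))) * (t * t) := by
    rw [← mul_assoc (i (cst k (θ - 1))), ← map_mul, mul_assoc (i (vGen k)) t,
      ← mul_assoc t, ht]
    simp only [map_mul, hcomm, mul_assoc]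
  show t * ((θ - 1) • t - (θ + 1) • (i (vGen k) * t)) +
      i (vGen k) * t * ((θ + 1) • t - (θ - 1) • (i (vGen k) * t)) = 0
  rw [hsmul, hsmul, hsmul, hsmul, mul_sub, mul_sub, ← mul_assoc t,
    ← mul_assoc (i (vGen k) * t)]
  rw [mul_assoc t, mul_assoc (i (vGen k) * t)]
  rw [e1, e2, e3, e4, ← sub_mul, ← sub_mul, ← add_mul, ← map_sub, ← map_sub,
    ← map_add, key, map_zero, zero_mul]
end
end

section
/- Let k be a field and S = k⟨x₁,x₂,x₃,x₄⟩/(x₃x₁-x₁x₃, x₃x₂-x₁x₄, x₄x₁-x₂x₃, x₄x₂-x₂x₄, x₁x₂-x₂x₃, x₄x₃-x₁x₄). The k-linear map on generators x₁ ↦ x₃, x₂ ↦ x₄, x₃ ↦ x₁, x₄ ↦ x₂ extends to a well-defined anti-automorphism of S; in particular S is isomorphic to its opposite algebra. -/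
/- k is a field; S is the quotient of the free algebra k⟨x₁,x₂,x₃,x₄⟩ by the
two-sided ideal generated by the six quadratic relations x₃x₁-x₁x₃,
x₃x₂-x₁x₄, x₄x₁-x₂x₃, x₄x₂-x₂x₄, x₁x₂-x₂x₃, x₄x₃-x₁x₄.  The assignment
x₁ ↦ x₃, x₂ ↦ x₄, x₃ ↦ x₁, x₄ ↦ x₂ extends to a well-defined
anti-automorphism of S, i.e. a k-algebra isomorphism S ≃ Sᵒᵖ with these
values; in particular S is isomorphic to its opposite algebra. -/

noncomputable section

variable (k : Type*) [Field k]

lemma mk_mul (a b : Fin 4) :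
    RingQuot.mkAlgHom k (SRel k) (FreeAlgebra.ι k a) *
      RingQuot.mkAlgHom k (SRel k) (FreeAlgebra.ι k b) =
    RingQuot.mkAlgHom k (SRel k) (FreeAlgebra.ι k a * FreeAlgebra.ι k b) :=
  (map_mul _ _ _).symm

def toOpHom : SAlg k →ₐ[k] (SAlg k)ᵐᵒᵖ :=
  RingQuot.liftAlgHom k ⟨FreeAlgebra.lift k fun i =>
      MulOpposite.op (RingQuot.mkAlgHom k (SRel k) (FreeAlgebra.ι k (i + 2))), by
    rintro a b h
    induction h <;>
    · simp only [map_mul, FreeAlgebra.lift_ι_apply, ← MulOpposite.op_mul, Fin.reduceAdd]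
      congr 1
      rw [mk_mul, mk_mul]
      exact RingQuot.mkAlgHom_rel k (by first
        | exact SRel.f1 | exact SRel.f2 | exact SRel.f3
        | exact SRel.f4 | exact SRel.f5 | exact SRel.f6)⟩

@[simp] lemma toOpHom_mk (i : Fin 4) :
    toOpHom k (RingQuot.mkAlgHom k (SRel k) (FreeAlgebra.ι k i)) =
      MulOpposite.op (RingQuot.mkAlgHom k (SRel k) (FreeAlgebra.ι k (i + 2))) := by
  simp [toOpHom, RingQuot.liftAlgHom_mkAlgHom_apply]

theorem S_anti_automorphism :
    ∃ F : SAlg k ≃ₐ[k] (SAlg k)ᵐᵒᵖ,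
      F (xS k 0) = MulOpposite.op (xS k 2) ∧
      F (xS k 1) = MulOpposite.op (xS k 3) ∧
      F (xS k 2) = MulOpposite.op (xS k 0) ∧
      F (xS k 3) = MulOpposite.op (xS k 1) := by
  refine ⟨AlgEquiv.ofAlgHom (toOpHom k) (AlgHom.opComm (toOpHom k)) ?_ ?_, ?_, ?_, ?_, ?_⟩
  · apply AlgHom.opComm.symm.injective
    apply RingQuot.ringQuot_ext'
    apply FreeAlgebra.hom_ext
    funext i
    fin_cases i <;>
      simp [AlgHom.opComm, AlgHom.op, Fin.reduceAdd]
  · apply RingQuot.ringQuot_ext'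
    apply FreeAlgebra.hom_ext
    funext i
    fin_cases i <;>
      simp [AlgHom.opComm, AlgHom.op, Fin.reduceAdd]
  all_goals simp [xS, Fin.reduceAdd]
end
end

section
/- Let k be a field of characteristic 0 (or more generally ρ, θ transcendental parameters) and σ the automorphism of k(u,v) with σ(u)=uv, σ(v)=v. Let A be the subalgebra of k(u,v)[t;σ] generated by t, ut, vt, uvt. Then the right ideal of A generated by the set {uv^{2n-1}tⁿ : n ≥ 1} is not finitely generated; in particular A is not right noetherian. -/
/- k is a field of characteristic 0; σ : k(u,v) → k(u,v) the k-automorphism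
with σ(u)=uv, σ(v)=v.  The skew polynomial ring k(u,v)[t;σ] is faithfully
realized inside the k-linear endomorphisms of K = k(u,v), with a·tⁿ acting
as x ↦ a·σⁿ(x).  A is the subalgebra generated by t, ut, vt, uvt.  Then the
right ideal of A generated by {uv^{2n-1}tⁿ : n ≥ 1} is not finitely
generated; in particular A is not right noetherian (its opposite ring is
not noetherian). -/

open MvPolynomial

set_option synthInstance.maxHeartbeats 1000000
set_option maxHeartbeats 1000000

noncomputable section

variable (k : Type*) [Field k]

/-- The generators t, ut, vt, uvt of A, as k-linear endomorphisms of k(u,v). -/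
def aGens (σ : RatFunc2 k ≃ₐ[k] RatFunc2 k) : Fin 4 → Module.End k (RatFunc2 k) :=
  ![(σ.toLinearMap : Module.End k (RatFunc2 k)),
    LinearMap.mulLeft k (uGen k) * σ.toLinearMap,
    LinearMap.mulLeft k (vGen k) * σ.toLinearMap,
    LinearMap.mulLeft k (uGen k * vGen k) * σ.toLinearMap]

/-- The subalgebra A = k⟨t, ut, vt, uvt⟩. -/
def Aalg (σ : RatFunc2 k ≃ₐ[k] RatFunc2 k) : Subalgebra k (Module.End k (RatFunc2 k)) :=
  Algebra.adjoin k (Set.range (aGens k σ))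

/-- The element u·v^{2n-1}·tⁿ of the skew polynomial ring, as an endomorphism. -/
def badElt (σ : RatFunc2 k ≃ₐ[k] RatFunc2 k) (n : ℕ) : Module.End k (RatFunc2 k) :=
  LinearMap.mulLeft k (uGen k * vGen k ^ (2 * n - 1)) *
    ((σ.toLinearMap : Module.End k (RatFunc2 k)) ^ n)

namespace NotNoethAux

variable {k}

lemma alg_inj : Function.Injective (algebraMap (MvPolynomial (Fin 2) k) (RatFunc2 k)) :=
  IsFractionRing.injective _ _

lemma u_ne_zero : uGen k ≠ 0 := by
  simp only [uGen, Ne, map_eq_zero_iff _ alg_inj]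
  exact MvPolynomial.X_ne_zero 0

lemma v_pow_inj {m m' : ℕ} (h : vGen k ^ m = vGen k ^ m') : m = m' := by
  have h2 : (X 1 : MvPolynomial (Fin 2) k) ^ m = X 1 ^ m' := by
    apply alg_inj
    simpa [vGen, map_pow] using h
  have := congrArg MvPolynomial.totalDegree h2
  simpa [MvPolynomial.totalDegree_X_pow] using this

/-- linear independence of the monomials `u^a v^b` over `k`. -/
lemma mon_indep : LinearIndependent k (fun p : ℕ × ℕ => uGen k ^ p.1 * vGen k ^ p.2) := by
  have hb := (MvPolynomial.basisMonomials (Fin 2) k).linearIndependent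
  have hemb : Function.Injective
      (fun p : ℕ × ℕ => (Finsupp.single (0 : Fin 2) p.1 + Finsupp.single (1 : Fin 2) p.2)) := by
    intro p q h
    have h0 := congrFun (congrArg (fun f : Fin 2 →₀ ℕ => (f : Fin 2 → ℕ)) h) 0
    have h1 := congrFun (congrArg (fun f : Fin 2 →₀ ℕ => (f : Fin 2 → ℕ)) h) 1
    simp [Finsupp.single_apply] at h0 h1
    exact Prod.ext h0 h1
  have h2 := hb.comp _ hemb
  have h3 := h2.map' ((IsScalarTower.toAlgHom k (MvPolynomial (Fin 2) k) (RatFunc2 k)).toLinearMap)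
    (by rw [LinearMap.ker_eq_bot]; exact alg_inj)
  convert h3 using 1
  funext p
  simp only [Function.comp_apply, MvPolynomial.coe_basisMonomials, AlgHom.toLinearMap_apply,
    IsScalarTower.coe_toAlgHom']
  rw [show (MvPolynomial.monomial ((Finsupp.single (0:Fin 2) p.1) + Finsupp.single 1 p.2) (1:k))
      = X 0 ^ p.1 * X 1 ^ p.2 from by
    rw [MvPolynomial.X_pow_eq_monomial, MvPolynomial.X_pow_eq_monomial,
      MvPolynomial.monomial_mul, one_mul]]
  rw [map_mul, map_pow, map_pow]
  rfl
  all_goals rfl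


variable (σ : RatFunc2 k ≃ₐ[k] RatFunc2 k)

/-- monomial element `u^a v^b t^m` of the skew polynomial ring, as endomorphism. -/
def Emon (a b m : ℕ) : Module.End k (RatFunc2 k) :=
  LinearMap.mulLeft k (uGen k ^ a * vGen k ^ b) * σ.toLinearMap ^ m

lemma Emon_apply (a b m : ℕ) (x : RatFunc2 k) :
    Emon σ a b m x = uGen k ^ a * vGen k ^ b * (σ.toLinearMap ^ m) x := rfl

lemma sp_mul (m : ℕ) (x y : RatFunc2 k) :
    (σ.toLinearMap ^ m) (x * y) = (σ.toLinearMap ^ m) x * (σ.toLinearMap ^ m) y := by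
  induction m generalizing x y with
  | zero => simp
  | succ m ih =>
      simp only [pow_succ, Module.End.mul_apply, AlgEquiv.toLinearMap_apply, map_mul, ih]

lemma sp_one (m : ℕ) : (σ.toLinearMap ^ m) 1 = 1 := by
  induction m with
  | zero => simp
  | succ m ih => simp only [pow_succ', Module.End.mul_apply, AlgEquiv.toLinearMap_apply, ih, map_one]

lemma sp_pow (m a : ℕ) (x : RatFunc2 k) :
    (σ.toLinearMap ^ m) (x ^ a) = ((σ.toLinearMap ^ m) x) ^ a := by
  induction a with
  | zero => simpa using sp_one σ m
  | succ a ih => rw [pow_succ, sp_mul, ih, pow_succ]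

variable (hσu : σ (uGen k) = uGen k * vGen k) (hσv : σ (vGen k) = vGen k)
include hσu hσv

omit hσu in
lemma sp_v (m : ℕ) : (σ.toLinearMap ^ m) (vGen k) = vGen k := by
  induction m with
  | zero => simp
  | succ m ih => simp only [pow_succ', Module.End.mul_apply, AlgEquiv.toLinearMap_apply, ih, hσv]

lemma sp_u (m : ℕ) : (σ.toLinearMap ^ m) (uGen k) = uGen k * vGen k ^ m := by
  induction m with
  | zero => simp
  | succ m ih =>
      rw [pow_succ', Module.End.mul_apply, AlgEquiv.toLinearMap_apply, ih, map_mul, map_pow,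
        hσu, hσv]
      ring

lemma sp_mon (a b m : ℕ) :
    (σ.toLinearMap ^ m) (uGen k ^ a * vGen k ^ b) = uGen k ^ a * vGen k ^ (b + a * m) := by
  rw [sp_mul, sp_pow, sp_pow, sp_u σ hσu hσv, sp_v σ hσv]
  ring

lemma Emon_mul (a b m a' b' m' : ℕ) :
    Emon σ a b m * Emon σ a' b' m' = Emon σ (a + a') (b + (b' + a' * m)) (m + m') := by
  apply LinearMap.ext; intro x
  simp only [Emon, Module.End.mul_apply, LinearMap.mulLeft_apply]
  rw [sp_mul, sp_mon σ hσu hσv, pow_add σ.toLinearMap m m', Module.End.mul_apply]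
  ring


omit hσu hσv in
lemma badElt_apply' (n : ℕ) (x : RatFunc2 k) :
    (LinearMap.mulLeft k (uGen k * vGen k ^ (2 * n - 1)) * (σ.toLinearMap ^ n)) x
      = uGen k * vGen k ^ (2 * n - 1) * (σ.toLinearMap ^ n) x := rfl

/-- `t^m` as a monoid hom of `k(u,v)`. -/
def mhPow (m : ℕ) : RatFunc2 k →* RatFunc2 k where
  toFun := ⇑(σ.toLinearMap ^ m)
  map_one' := sp_one σ m
  map_mul' := sp_mul σ m

include hσu hσv in
lemma sigma_indep :
    LinearIndependent (RatFunc2 k)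
      (fun m : ℕ => (⇑(σ.toLinearMap ^ m) : RatFunc2 k → RatFunc2 k)) := by
  have hinj : Function.Injective (mhPow σ) := by
    intro m m' h
    have h2 : (σ.toLinearMap ^ m) (uGen k) = (σ.toLinearMap ^ m') (uGen k) :=
      DFunLike.congr_fun h (uGen k)
    rw [sp_u σ hσu hσv, sp_u σ hσu hσv] at h2
    exact v_pow_inj (mul_left_cancel₀ u_ne_zero h2)
  exact (linearIndependent_monoidHom (RatFunc2 k) (RatFunc2 k)).comp (mhPow σ) hinj

omit hσu hσv in
lemma Emon_congr {a b m a' b' m' : ℕ} (ha : a = a') (hb : b = b') (hm : m = m') :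
    Emon σ a b m = Emon σ a' b' m' := by rw [ha, hb, hm]

omit hσu hσv in
lemma Emon_id : (Emon σ 0 0 0) = 1 := by
  apply LinearMap.ext; intro x
  simp [Emon, Module.End.mul_apply, LinearMap.mulLeft_apply]

def EsetS : Set (Module.End k (RatFunc2 k)) :=
  {x | ∃ a b m : ℕ, a ≤ m ∧ b ≤ (a + 1) * m ∧ x = Emon σ a b m}

def QsetS (N0 : ℕ) : Set (Module.End k (RatFunc2 k)) :=
  {x | ∃ n a b m : ℕ, 1 ≤ n ∧ n ≤ N0 ∧ a ≤ m ∧ b ≤ (a + 1) * m ∧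
      x = Emon σ (1 + a) (2 * n - 1 + (b + a * n)) (n + m)}

omit hσu hσv in
lemma QsetS_mono {N0 N1 : ℕ} (h : N0 ≤ N1) : QsetS σ N0 ⊆ QsetS σ N1 := by
  rintro x ⟨n, a, b, m, h1, h2, h3, h4, h5⟩
  exact ⟨n, a, b, m, h1, h2.trans h, h3, h4, h5⟩

include hσu hσv

lemma span_E_mul_E : ∀ x ∈ Submodule.span k (EsetS σ), ∀ y ∈ Submodule.span k (EsetS σ),
    x * y ∈ Submodule.span k (EsetS σ) := by
  intro x hx y hy
  have hle : Submodule.span k (EsetS σ) * Submodule.span k (EsetS σ)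
      ≤ Submodule.span k (EsetS σ) := by
    rw [Submodule.span_mul_span]
    refine Submodule.span_le.mpr ?_
    rintro z ⟨x, ⟨a, b, m, ham, hbm, rfl⟩, y, ⟨a', b', m', ham', hbm', rfl⟩, rfl⟩
    refine Submodule.subset_span ⟨a + a', b + (b' + a' * m), m + m', by omega, by nlinarith,
      (Emon_mul σ hσu hσv a b m a' b' m').symm ▸ rfl⟩
  exact hle (Submodule.mul_mem_mul hx hy)

lemma Aalg_le_spanE : ∀ g ∈ Aalg k σ, g ∈ Submodule.span k (EsetS σ) := by
  intro g hg
  induction hg using Algebra.adjoin_induction with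
  | mem x hx =>
      obtain ⟨i, rfl⟩ := hx
      fin_cases i
      · refine Submodule.subset_span ⟨0, 0, 1, by omega, by omega, ?_⟩
        apply LinearMap.ext; intro x
        simp [Emon, aGens, Module.End.mul_apply, LinearMap.mulLeft_apply]
      · refine Submodule.subset_span ⟨1, 0, 1, by omega, by omega, ?_⟩
        apply LinearMap.ext; intro x
        simp [Emon, aGens, Module.End.mul_apply, LinearMap.mulLeft_apply]
      · refine Submodule.subset_span ⟨0, 1, 1, by omega, by omega, ?_⟩
        apply LinearMap.ext; intro x
        simp [Emon, aGens, Module.End.mul_apply, LinearMap.mulLeft_apply]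
      · refine Submodule.subset_span ⟨1, 1, 1, by omega, by omega, ?_⟩
        apply LinearMap.ext; intro x
        simp [Emon, aGens, Module.End.mul_apply, LinearMap.mulLeft_apply]
  | algebraMap r =>
      rw [Algebra.algebraMap_eq_smul_one]
      exact Submodule.smul_mem _ r (Submodule.subset_span
        ⟨0, 0, 0, le_refl _, le_refl _, (Emon_id σ).symm⟩)
  | add x y _ _ hx hy => exact Submodule.add_mem _ hx hy
  | mul x y _ _ hx hy => exact span_E_mul_E σ hσu hσv _ hx _ hy

lemma span_Q_mul_E (N0 : ℕ) :
    ∀ x ∈ Submodule.span k (QsetS σ N0), ∀ g ∈ Submodule.span k (EsetS σ),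
    x * g ∈ Submodule.span k (QsetS σ N0) := by
  intro x hx g hg
  have hle : Submodule.span k (QsetS σ N0) * Submodule.span k (EsetS σ)
      ≤ Submodule.span k (QsetS σ N0) := by
    rw [Submodule.span_mul_span]
    refine Submodule.span_le.mpr ?_
    rintro z ⟨x, ⟨n, a, b, m, h1, h2, h3, h4, rfl⟩, y, ⟨a', b', m', h5, h6, rfl⟩, rfl⟩
    refine Submodule.subset_span ⟨n, a + a', b + b' + a' * m, m + m', h1, h2, by omega,
      by nlinarith, ?_⟩
    show Emon σ (1 + a) (2 * n - 1 + (b + a * n)) (n + m) * Emon σ a' b' m' = _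
    rw [Emon_mul σ hσu hσv]
    refine Emon_congr σ (by omega) ?_ (by omega)
    generalize 2 * n - 1 = c
    ring
  exact hle (Submodule.mul_mem_mul hx hg)


omit hσu hσv in
lemma badElt_eq (n : ℕ) : badElt k σ n = Emon σ 1 (2 * n - 1) n := by
  simp [badElt, Emon, pow_one]

lemma badElt_mem (n : ℕ) (hn : 1 ≤ n) : badElt k σ n ∈ Aalg k σ := by
  have hvt : Emon σ 0 1 1 ∈ Aalg k σ := by
    have h2 : aGens k σ 2 ∈ Aalg k σ := Algebra.subset_adjoin ⟨2, rfl⟩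
    have : Emon σ 0 1 1 = aGens k σ 2 := by
      apply LinearMap.ext; intro x
      simp [Emon, aGens, Module.End.mul_apply, LinearMap.mulLeft_apply]
    rwa [this]
  have huvt : Emon σ 1 1 1 ∈ Aalg k σ := by
    have h3 : aGens k σ 3 ∈ Aalg k σ := Algebra.subset_adjoin ⟨3, rfl⟩
    have : Emon σ 1 1 1 = aGens k σ 3 := by
      apply LinearMap.ext; intro x
      simp [Emon, aGens, Module.End.mul_apply, LinearMap.mulLeft_apply]
    rwa [this]
  have hpow : (Emon σ 0 1 1) ^ (n - 1) = Emon σ 0 (n - 1) (n - 1) := by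
    induction (n - 1) with
    | zero => rw [pow_zero, Emon_id]
    | succ j ih =>
        rw [pow_succ, ih, Emon_mul σ hσu hσv]
        exact Emon_congr σ (by omega) (by omega) (by omega)
  have heq : badElt k σ n = Emon σ 0 (n - 1) (n - 1) * Emon σ 1 1 1 := by
    rw [Emon_mul σ hσu hσv, badElt_eq]
    exact Emon_congr σ (by omega) (by omega) (by omega)
  rw [heq, ← hpow]
  exact mul_mem (pow_mem hvt _) huvt

omit hσu hσv in
lemma mon_notmem (N : ℕ) : uGen k * vGen k ^ (2 * N - 1) ∉ Submodule.span k
    ((fun p : ℕ × ℕ => uGen k ^ p.1 * vGen k ^ p.2) ''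
      {p : ℕ × ℕ | 2 ≤ p.1 ∨ p.2 < 2 * N - 1}) := by
  have h := mon_indep.notMem_span_image (R := k) (s := {p : ℕ × ℕ | 2 ≤ p.1 ∨ p.2 < 2 * N - 1})
    (x := ((1 : ℕ), 2 * N - 1)) (by simp only [Set.mem_setOf_eq]; omega)
  rw [show uGen k * vGen k ^ (2 * N - 1) = uGen k ^ (1 : ℕ) * vGen k ^ (2 * N - 1) from by
    rw [pow_one]]
  exact h

lemma key (N0 N : ℕ) (hN : N0 < N) :
    badElt k σ N ∉ Submodule.span k (QsetS σ N0) := by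
  classical
  intro hmem
  obtain ⟨nE, f, g, hsum⟩ := Submodule.mem_span_set'.mp hmem
  have hD : ∀ i : Fin nE, ∃ n a b m : ℕ, 1 ≤ n ∧ n ≤ N0 ∧ a ≤ m ∧ b ≤ (a + 1) * m ∧
      (g i : Module.End k (RatFunc2 k))
        = Emon σ (1 + a) (2 * n - 1 + (b + a * n)) (n + m) := fun i => (g i).2
  choose nn aa bb mm hn1 hn2 ham hbm hg using hD
  set μ : Fin nE → ℕ := fun i => nn i + mm i with hμ
  set cf : Fin nE → RatFunc2 k :=
    fun i => uGen k ^ (1 + aa i) * vGen k ^ (2 * nn i - 1 + (bb i + aa i * nn i)) with hcf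
  set T : Finset ℕ := Finset.image μ Finset.univ ∪ {N} with hT
  set d : ℕ → RatFunc2 k := fun m =>
    (∑ i ∈ Finset.univ.filter (fun i => μ i = m), f i • cf i) -
      (if m = N then uGen k * vGen k ^ (2 * N - 1) else 0) with hd
  have hNT : N ∈ T := Finset.mem_union_right _ (Finset.mem_singleton_self N)
  have hzero : ∑ m ∈ T, d m • (⇑(σ.toLinearMap ^ m) : RatFunc2 k → RatFunc2 k) = 0 := by
    funext x
    have hx := LinearMap.congr_fun hsum x
    simp only [LinearMap.sum_apply, LinearMap.smul_apply] at hx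
    have hgx : ∀ i : Fin nE,
        (g i : Module.End k (RatFunc2 k)) x = cf i * (σ.toLinearMap ^ μ i) x := by
      intro i
      rw [hg i, Emon_apply]
    rw [badElt] at hx
    rw [badElt_apply' σ N x] at hx
    have h2 : ∑ i, (f i • cf i) * (σ.toLinearMap ^ μ i) x
        = (uGen k * vGen k ^ (2 * N - 1)) * (σ.toLinearMap ^ N) x := by
      rw [← hx]
      refine Finset.sum_congr rfl fun i _ => ?_
      rw [hgx i, smul_mul_assoc]
    have h1 : (∑ m ∈ T, d m • (⇑(σ.toLinearMap ^ m) : RatFunc2 k → RatFunc2 k)) x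
        = (∑ i, (f i • cf i) * (σ.toLinearMap ^ μ i) x) -
          (uGen k * vGen k ^ (2 * N - 1)) * (σ.toLinearMap ^ N) x := by
      rw [Finset.sum_apply]
      simp only [Pi.smul_apply, smul_eq_mul, hd, sub_mul, Finset.sum_sub_distrib]
      congr 1
      · rw [← Finset.sum_fiberwise_of_maps_to
            (fun i _ => Finset.mem_union_left _ (Finset.mem_image_of_mem μ (Finset.mem_univ i)))
            (fun i => (f i • cf i) * (σ.toLinearMap ^ μ i) x)]
        refine Finset.sum_congr rfl fun m hm => ?_
        rw [Finset.sum_mul]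
        refine Finset.sum_congr rfl fun i hi => ?_
        rw [(Finset.mem_filter.mp hi).2]
      · simp only [ite_mul, zero_mul]
        rw [Finset.sum_ite_eq' T N (fun m => uGen k * vGen k ^ (2 * N - 1) * (σ.toLinearMap ^ m) x)]
        rw [if_pos hNT]
    rw [Pi.zero_apply, h1, h2, sub_self]
  have hdN : d N = 0 :=
    (linearIndependent_iff'.mp (sigma_indep σ hσu hσv)) T d hzero N hNT
  have hsum2 : ∑ i ∈ Finset.univ.filter (fun i => μ i = N), f i • cf i
      = uGen k * vGen k ^ (2 * N - 1) := by
    rw [hd] at hdN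
    simp only [if_pos rfl] at hdN
    exact sub_eq_zero.mp hdN
  apply mon_notmem (k := k) N
  rw [← hsum2]
  refine Submodule.sum_mem _ fun i hi => Submodule.smul_mem _ _ (Submodule.subset_span ?_)
  refine ⟨(1 + aa i, 2 * nn i - 1 + (bb i + aa i * nn i)), ?_, rfl⟩
  have hμi : nn i + mm i = N := (Finset.mem_filter.mp hi).2
  by_cases ha : aa i = 0
  · right
    simp only [ha, zero_mul, add_zero, Set.mem_setOf_eq]
    have hb' : bb i ≤ mm i := by have h := hbm i; rw [ha] at h; simpa using h
    have h1 := hn1 i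
    have h2 := hn2 i
    omega
  · left
    simp only [Set.mem_setOf_eq]
    omega

include hσu hσv in
lemma main_notFG :
    ¬ (Submodule.span (Aalg k σ)ᵐᵒᵖ
        {x : Aalg k σ | ∃ n : ℕ, 1 ≤ n ∧ (x : Module.End k (RatFunc2 k)) = badElt k σ n} :
        Submodule (Aalg k σ)ᵐᵒᵖ (Aalg k σ)).FG := by
  classical
  have main : ¬ (Submodule.span (Aalg k σ)ᵐᵒᵖ
      {x : Aalg k σ | ∃ n : ℕ, 1 ≤ n ∧ (x : Module.End k (RatFunc2 k)) = badElt k σ n} :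
      Submodule (Aalg k σ)ᵐᵒᵖ (Aalg k σ)).FG := by
    rintro ⟨F, hF⟩
    have hx_bound : ∀ x : Aalg k σ, x ∈ Submodule.span (Aalg k σ)ᵐᵒᵖ
        {x : Aalg k σ | ∃ n : ℕ, 1 ≤ n ∧ (x : Module.End k (RatFunc2 k)) = badElt k σ n} →
        ∃ N0 : ℕ, (x : Module.End k (RatFunc2 k)) ∈ Submodule.span k (QsetS σ N0) := by
      intro x hx
      induction hx using Submodule.span_induction with
      | mem y hy =>
          obtain ⟨n, hn, hye⟩ := hy
          refine ⟨n, ?_⟩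
          rw [hye, badElt_eq]
          refine Submodule.subset_span ⟨n, 0, 0, 0, hn, le_refl n, le_refl 0, by omega, ?_⟩
          exact Emon_congr σ (by omega) (by omega) (by omega)
      | zero => exact ⟨1, by simp⟩
      | add y z _ _ ihy ihz =>
          obtain ⟨N1, h1⟩ := ihy
          obtain ⟨N2, h2⟩ := ihz
          refine ⟨max N1 N2, ?_⟩
          rw [show ((y + z : Aalg k σ) : Module.End k (RatFunc2 k))
            = (y : Module.End k (RatFunc2 k)) + (z : Module.End k (RatFunc2 k)) from rfl]
          exact Submodule.add_mem _
            (Submodule.span_mono (QsetS_mono σ (le_max_left N1 N2)) h1)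
            (Submodule.span_mono (QsetS_mono σ (le_max_right N1 N2)) h2)
      | smul a y _ ihy =>
          obtain ⟨N1, h1⟩ := ihy
          refine ⟨N1, ?_⟩
          rw [show ((a • y : Aalg k σ) : Module.End k (RatFunc2 k))
            = (y : Module.End k (RatFunc2 k)) * (a.unop : Module.End k (RatFunc2 k)) from rfl]
          exact span_Q_mul_E σ hσu hσv N1 _ h1 _ (Aalg_le_spanE σ hσu hσv _ a.unop.2)
    have hF' : ∀ f : Aalg k σ, f ∈ F →
        ∃ N0 : ℕ, (f : Module.End k (RatFunc2 k)) ∈ Submodule.span k (QsetS σ N0) := by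
      intro f hf
      refine hx_bound f ?_
      rw [← hF]
      exact Submodule.subset_span hf
    let φ : Aalg k σ → ℕ := fun f =>
      if h : ∃ N0 : ℕ, (f : Module.End k (RatFunc2 k)) ∈ Submodule.span k (QsetS σ N0)
      then h.choose else 0
    have hφ : ∀ f ∈ F, (f : Module.End k (RatFunc2 k))
        ∈ Submodule.span k (QsetS σ (F.sup φ)) := by
      intro f hf
      have h := hF' f hf
      have h2 : (f : Module.End k (RatFunc2 k)) ∈ Submodule.span k (QsetS σ (φ f)) := by
        simp only [φ, dif_pos h]
        exact h.choose_spec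
      exact Submodule.span_mono (QsetS_mono σ (Finset.le_sup hf)) h2
    have hall : ∀ x : Aalg k σ, x ∈ Submodule.span (Aalg k σ)ᵐᵒᵖ (↑F : Set (Aalg k σ)) →
        (x : Module.End k (RatFunc2 k)) ∈ Submodule.span k (QsetS σ (F.sup φ)) := by
      intro x hx
      induction hx using Submodule.span_induction with
      | mem y hy => exact hφ y hy
      | zero => simp
      | add y z _ _ ihy ihz =>
          rw [show ((y + z : Aalg k σ) : Module.End k (RatFunc2 k))
            = (y : Module.End k (RatFunc2 k)) + (z : Module.End k (RatFunc2 k)) from rfl]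
          exact Submodule.add_mem _ ihy ihz
      | smul a y _ ihy =>
          rw [show ((a • y : Aalg k σ) : Module.End k (RatFunc2 k))
            = (y : Module.End k (RatFunc2 k)) * (a.unop : Module.End k (RatFunc2 k)) from rfl]
          exact span_Q_mul_E σ hσu hσv _ _ ihy _ (Aalg_le_spanE σ hσu hσv _ a.unop.2)
    have hmemA : badElt k σ (F.sup φ + 1) ∈ Aalg k σ :=
      badElt_mem σ hσu hσv (F.sup φ + 1) (by omega)
    have hxN : (⟨badElt k σ (F.sup φ + 1), hmemA⟩ : Aalg k σ)
        ∈ Submodule.span (Aalg k σ)ᵐᵒᵖ (↑F : Set (Aalg k σ)) := by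
      rw [hF]
      exact Submodule.subset_span ⟨F.sup φ + 1, by omega, rfl⟩
    exact key σ hσu hσv (F.sup φ) (F.sup φ + 1) (by omega) (hall _ hxN)
  exact main

end NotNoethAux

set_option maxHeartbeats 2000000 in
theorem A_not_right_noetherian [CharZero k]
    (σ : RatFunc2 k ≃ₐ[k] RatFunc2 k)
    (hσu : σ (uGen k) = uGen k * vGen k) (hσv : σ (vGen k) = vGen k) :
    ¬ (Submodule.span (Aalg k σ)ᵐᵒᵖ
        {x : Aalg k σ | ∃ n : ℕ, 1 ≤ n ∧ (x : Module.End k (RatFunc2 k)) = badElt k σ n} :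
        Submodule (Aalg k σ)ᵐᵒᵖ (Aalg k σ)).FG ∧
    ¬ IsNoetherianRing (Aalg k σ)ᵐᵒᵖ := by
  have main := NotNoethAux.main_notFG σ hσu hσv
  refine ⟨main, fun hnoe => main ?_⟩
  haveI : IsNoetherian (Aalg k σ)ᵐᵒᵖ (Aalg k σ)ᵐᵒᵖ := hnoe
  let e : (Aalg k σ) ≃ₗ[(Aalg k σ)ᵐᵒᵖ] (Aalg k σ)ᵐᵒᵖ :=
    { toFun := MulOpposite.op, invFun := MulOpposite.unop,
      left_inv := fun _ => rfl, right_inv := fun _ => rfl,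
      map_add' := fun _ _ => rfl, map_smul' := fun _ _ => rfl }
  haveI : IsNoetherian (Aalg k σ)ᵐᵒᵖ (Aalg k σ) := isNoetherian_of_linearEquiv e.symm
  exact IsNoetherian.noetherian _
end
end

section
/- Let n ≥ 0 and let a(i) = C(i,2) and b(i) = C(n+1,2) - C(n-i,2) for 0 ≤ i ≤ n. Let W be the set of pairs (i,j) with 0 ≤ i ≤ n and a(i) ≤ j ≤ b(i). If a pair (i,j) ∈ ℤ² satisfies both: (there exists (p,q) ∈ W with i ≥ p and j ≤ q) and (there exists (p',q') ∈ W with i ≤ p' and j ≥ q'), then (i,j) ∈ W. -/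
/- n is a nonnegative integer; a(i) = C(i,2) and b(i) = C(n+1,2) - C(n-i,2)
for 0 ≤ i ≤ n; W is the set of pairs (i,j) ∈ ℤ² with 0 ≤ i ≤ n and
a(i) ≤ j ≤ b(i).  If a pair (i,j) ∈ ℤ² satisfies both: (there exists
(p,q) ∈ W with i ≥ p and j ≤ q) and (there exists (p',q') ∈ W with i ≤ p'
and j ≥ q'), then (i,j) ∈ W. -/

theorem monomial_region_intersection (n : ℕ) :
    let W : Set (ℤ × ℤ) := {p | ∃ i : ℕ, i ≤ n ∧ p.1 = (i : ℤ) ∧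
      (Nat.choose i 2 : ℤ) ≤ p.2 ∧
      p.2 ≤ (Nat.choose (n + 1) 2 : ℤ) - (Nat.choose (n - i) 2 : ℤ)}
    ∀ p : ℤ × ℤ,
      (∃ q ∈ W, q.1 ≤ p.1 ∧ p.2 ≤ q.2) →
      (∃ q' ∈ W, p.1 ≤ q'.1 ∧ q'.2 ≤ p.2) →
      p ∈ W := by
  intro W p h1 h2
  obtain ⟨q, ⟨a, ha, hqa, _, hqb⟩, h1l, h1r⟩ := h1
  obtain ⟨q', ⟨a', ha', hqa', hqb', _⟩, h2l, h2r⟩ := h2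
  -- p.1 is an integer with a ≤ p.1 ≤ a'
  have hp0 : (0 : ℤ) ≤ p.1 := le_trans (by rw [hqa]; exact_mod_cast Nat.zero_le a) h1l
  set i : ℕ := p.1.toNat with hi
  have hpi : p.1 = (i : ℤ) := (Int.toNat_of_nonneg hp0).symm
  have hai : a ≤ i := by omega
  have hia' : i ≤ a' := by omega
  have hin : i ≤ n := le_trans hia' ha'
  refine ⟨i, hin, hpi, ?_, ?_⟩
  · calc (Nat.choose i 2 : ℤ) ≤ (Nat.choose a' 2 : ℤ) := by
          exact_mod_cast Nat.choose_le_choose 2 hia'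
      _ ≤ q'.2 := hqb'
      _ ≤ p.2 := h2r
  · have hc : (Nat.choose (n - i) 2 : ℤ) ≤ (Nat.choose (n - a) 2 : ℤ) := by
      exact_mod_cast Nat.choose_le_choose 2 (Nat.sub_le_sub_left hai n)
    calc p.2 ≤ q.2 := h1r
      _ ≤ (Nat.choose (n + 1) 2 : ℤ) - (Nat.choose (n - a) 2 : ℤ) := hqb
      _ ≤ (Nat.choose (n + 1) 2 : ℤ) - (Nat.choose (n - i) 2 : ℤ) := by linarith
end
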